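/- Suppose 5 divides n, and define f : ℤ/nℤ → {1,2,3} as above (1 if representative ≡ 0 mod 5, 2 if ≡ ±1 mod 5, 3 if ≡ ±2 mod 5). Then every monochromatic triple (x, y, z) with x + y = z in ℤ/nℤ has all three elements of color 1 (red). -/

import Mathlib

/-!
The colour of `x` depends only on `x.val` modulo 5, up to sign, and the colouring of `ZMod 5` is
invariant under negation. Since `5 ∣ n`, the reduction `ZMod n → ZMod 5` is additive, so the colour
of `x` is that of its image in `ZMod 5` and the claim becomes the finite check that `{±1}` and
`{±2}` are sum-free in `ZMod 5`.
-/

def colourMod5 (r : ZMod 5) : Fin 3 :=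
  if r.val = 0 then 0 else if r.val = 1 ∨ r.val = 4 then 1 else 2

theorem colourMod5_neg (r : ZMod 5) : colourMod5 (-r) = colourMod5 r := by
  revert r; decide

theorem colourMod5_eq_zero_of_add (a b : ZMod 5) (hab : colourMod5 a = colourMod5 b)
    (hb : colourMod5 b = colourMod5 (a + b)) : colourMod5 a = 0 := by
  revert a b; decide

theorem Int.natCast_natAbs_eq_or_neg {R : Type*} [Ring R] (a : ℤ) :
    (a.natAbs : R) = a ∨ (a.natAbs : R) = -a := by
  rw [Nat.cast_natAbs]
  rcases abs_choice a with ha | ha <;> simp [ha]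

/-- For `n = 0`, `x.val` is `x.natAbs`, hence the sign. -/
theorem ZMod.natCast_val_eq_castHom_or_neg {m n : ℕ} (h : m ∣ n) (x : ZMod n) :
    (x.val : ZMod m) = castHom h (ZMod m) x ∨ (x.val : ZMod m) = -castHom h (ZMod m) x := by
  rcases n with _ | n
  · exact Int.natCast_natAbs_eq_or_neg (R := ZMod m) x
  · exact Or.inl (natCast_val x)

theorem colourMod5_natCast_val {n : ℕ} (h5 : 5 ∣ n) (x : ZMod n) :
    colourMod5 (x.val : ZMod 5) = colourMod5 (ZMod.castHom h5 (ZMod 5) x) := by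
  rcases ZMod.natCast_val_eq_castHom_or_neg h5 x with hx | hx <;> rw [hx]
  exact colourMod5_neg _

theorem stmt16_general (n : ℕ) (h5 : 5 ∣ n) (f : ZMod n → Fin 3)
    (hf : ∀ x : ZMod n, f x = if x.val % 5 = 0 then 0
      else if x.val % 5 = 1 ∨ x.val % 5 = 4 then 1 else 2) :
    ∀ x y z : ZMod n, x + y = z → f x = f y → f y = f z → f x = 0 := by
  have hf' : ∀ x, f x = colourMod5 (ZMod.castHom h5 (ZMod 5) x) := fun x => by
    rw [hf, ← colourMod5_natCast_val, colourMod5, ZMod.val_natCast]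
  rintro x y z rfl hxy hyz
  simp only [hf', map_add] at hxy hyz ⊢
  exact colourMod5_eq_zero_of_add _ _ hxy hyz

theorem stmt16 (n : ℕ) (hn : 0 < n) (h5 : 5 ∣ n) (f : ZMod n → Fin 3)
    (hf : ∀ x : ZMod n, f x = if x.val % 5 = 0 then 0
      else if x.val % 5 = 1 ∨ x.val % 5 = 4 then 1 else 2) :
    ∀ x y z : ZMod n, x + y = z → f x = f y → f y = f z → f x = 0 :=
  stmt16_general n h5 f hf
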